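/- arXiv:2409.16055 — 2 statements merged into one kernel-verified Lean document; each statement's English description precedes it below -/
import Mathlib

section
/- Let H be a hypergraph and let W ⊆ V(H) with |W| ≥ 2. Then W is a unit of H if and only if W is a maximal subset of V(H) (with respect to inclusion) such that the subspace S_W = {x : V(H) → ℂ : x(v) = 0 for all v ∉ W and ∑_{v ∈ W} x(v) = 0} is contained in the null space of B_H. -/
/-!
Testing `S_W ⊆ ker B_H` on the vectors `δ_a - δ_b` (`a, b ∈ W`) shows that it holds exactly
when all vertices of `W` have the same star, i.e. when `W` lies inside a single unit. Hence the
maximal such `W` are the units, provided `W` is nonempty.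
-/

open Finset

/-- The edge-vertex incidence matrix of a hypergraph with edge set `E`. -/
def incidence {V : Type*} [DecidableEq V] (E : Finset (Finset V)) :
    Matrix {e // e ∈ E} V ℂ :=
  fun e v => if v ∈ e.1 then 1 else 0

/-- The star of a vertex `v`: the set of hyperedges containing `v`. -/
def edgeStar {V : Type*} [DecidableEq V] (E : Finset (Finset V)) (v : V) :
    Finset (Finset V) :=
  E.filter (fun e => v ∈ e)

/-- The unit of the vertex `v`: the set of vertices with the same star as `v`. -/
def unitOf {V : Type*} [Fintype V] [DecidableEq V] (E : Finset (Finset V)) (v : V) :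
    Finset V :=
  Finset.univ.filter (fun u => edgeStar E u = edgeStar E v)

/-- The set of all units of the hypergraph. -/
def unitsFinset {V : Type*} [Fintype V] [DecidableEq V] (E : Finset (Finset V)) :
    Finset (Finset V) :=
  Finset.univ.image (unitOf E)

/-- `SW E W` says that the subspace `S_W = {x : V → ℂ : x(v) = 0 for v ∉ W and
∑_{v ∈ W} x(v) = 0}` is contained in the null space of `B_H`. -/
def SWinKer {V : Type*} [Fintype V] [DecidableEq V] (E : Finset (Finset V))
    (W : Finset V) : Prop :=
  ∀ x : V → ℂ, (∀ v, v ∉ W → x v = 0) → ∑ v ∈ W, x v = 0 →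
    (incidence E).mulVec x = 0

section Hypergraph

variable {V : Type*} [DecidableEq V]

lemma mem_edgeStar {E : Finset (Finset V)} {v : V} {e : Finset V} :
    e ∈ edgeStar E v ↔ e ∈ E ∧ v ∈ e :=
  mem_filter

lemma incidence_mulVec_apply [Fintype V] (E : Finset (Finset V)) (x : V → ℂ)
    (e : {e // e ∈ E}) : (incidence E).mulVec x e = ∑ v ∈ e.1, x v := by
  simp only [Matrix.mulVec, dotProduct, incidence, ite_mul, one_mul, zero_mul]
  rw [sum_ite_mem, univ_inter]

section Fintype

variable [Fintype V] {E : Finset (Finset V)}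

lemma mem_unitOf {u v : V} : u ∈ unitOf E v ↔ edgeStar E u = edgeStar E v := by
  simp [unitOf]

lemma mem_of_sWinKer {W : Finset V} (h : SWinKer E W) {e : Finset V} (he : e ∈ E)
    {a b : V} (ha : a ∈ W) (hb : b ∈ W) (hae : a ∈ e) : b ∈ e := by
  by_contra hbe
  set x : V → ℂ := Pi.single a 1 - Pi.single b 1
  have hx : ∀ v, v ∉ W → x v = 0 := fun v hv => by
    simp [x, ne_of_mem_of_not_mem ha hv |>.symm,
      ne_of_mem_of_not_mem hb hv |>.symm]
  have hsum : ∑ v ∈ W, x v = 0 := by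
    simp [x, sum_sub_distrib, sum_pi_single', ha, hb]
  have hedge := congrFun (h x hx hsum) ⟨e, he⟩
  rw [incidence_mulVec_apply] at hedge
  simp [x, sum_sub_distrib, sum_pi_single', hae, hbe] at hedge

lemma edgeStar_eq_of_sWinKer {W : Finset V} (h : SWinKer E W) {u w : V} (hu : u ∈ W)
    (hw : w ∈ W) : edgeStar E u = edgeStar E w := by
  ext e
  simp only [mem_edgeStar]
  exact ⟨fun ⟨he, hue⟩ => ⟨he, mem_of_sWinKer h he hu hw hue⟩,
    fun ⟨he, hwe⟩ => ⟨he, mem_of_sWinKer h he hw hu hwe⟩⟩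

-- Every edge either contains `W` or misses it, so `B_H x` has entries `∑_W x` or `0`.
lemma sWinKer_of_edgeStar_eq {W : Finset V}
    (h : ∀ u ∈ W, ∀ w ∈ W, edgeStar E u = edgeStar E w) : SWinKer E W := by
  intro x hx hsum
  funext e
  rw [incidence_mulVec_apply]
  by_cases hmeet : ∃ u ∈ W, u ∈ e.1
  · obtain ⟨u, hu, hue⟩ := hmeet
    have hWe : W ⊆ e.1 := fun w hw =>
      (mem_edgeStar.mp (h u hu w hw ▸ mem_edgeStar.mpr ⟨e.2, hue⟩)).2
    rw [← sum_subset hWe fun v _ hv => hx v hv, hsum]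
    rfl
  · push Not at hmeet
    exact sum_eq_zero fun v hv => hx v fun hvW => hmeet v hvW hv

lemma sWinKer_unitOf (v : V) : SWinKer E (unitOf E v) :=
  sWinKer_of_edgeStar_eq fun _ hu _ hw => (mem_unitOf.mp hu).trans (mem_unitOf.mp hw).symm

lemma subset_unitOf_of_sWinKer {W : Finset V} (h : SWinKer E W) {v : V} (hv : v ∈ W) :
    W ⊆ unitOf E v :=
  fun _ hu => mem_unitOf.mpr (edgeStar_eq_of_sWinKer h hu hv)

end Fintype

end Hypergraph

theorem stmt12_general {V : Type*} [Fintype V] [DecidableEq V]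
    (E : Finset (Finset V))
    (W : Finset V) (hW : 2 ≤ W.card) :
    W ∈ unitsFinset E ↔
      (SWinKer E W ∧ ∀ W' : Finset V, W ⊂ W' → ¬ SWinKer E W') := by
  constructor
  · intro hunit
    obtain ⟨v, -, rfl⟩ := mem_image.mp hunit
    refine ⟨sWinKer_unitOf v, fun W' hlt hW' => ?_⟩
    obtain ⟨w, hw', hw⟩ := exists_of_ssubset hlt
    have hv' : v ∈ W' := hlt.subset (mem_unitOf.mpr rfl)
    exact hw (subset_unitOf_of_sWinKer hW' hv' hw')
  · rintro ⟨hker, hmax⟩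
    obtain ⟨v, hv⟩ := card_pos.mp (by omega : 0 < W.card)
    have hsub := subset_unitOf_of_sWinKer hker hv
    have heq : W = unitOf E v :=
      hsub.eq_of_not_ssubset fun hlt => hmax _ hlt (sWinKer_unitOf v)
    exact heq ▸ mem_image_of_mem _ (mem_univ v)

/-- Let `H` be a hypergraph and `W ⊆ V(H)` with `|W| ≥ 2`.  Then `W` is a unit of `H`
iff `W` is a maximal subset of `V(H)` (w.r.t. inclusion) such that `S_W` is contained in
the null space of `B_H`. -/
theorem stmt12 {V : Type*} [Fintype V] [DecidableEq V]
    (E : Finset (Finset V)) (hE : ∀ e ∈ E, e.Nonempty)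
    (W : Finset V) (hW : 2 ≤ W.card) :
    W ∈ unitsFinset E ↔
      (SWinKer E W ∧ ∀ W' : Finset V, W ⊂ W' → ¬ SWinKer E W') :=
  stmt12_general E W hW
end

section
/- Let H be a hypergraph with set of units 𝔘(H). Then the dimension of the null space of B_H equals the dimension of the null space of B_{H/𝓡_u(H)} plus |V(H)| − |𝔘(H)|, where H/𝓡_u(H) is the unit-contraction of H. -/
/-!
Since `v ∈ e ↔ unit(v) ∈ ẽ` for every hyperedge `e`, the map `e ↦ ẽ` is a bijection of the
edge sets, and along it `B_H` is `B_{H/𝓡_u(H)}` with the column of each unit `W` repeated once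
for every vertex of `W`. Repeating columns does not change the rank, so the identity follows
from rank–nullity, as `|𝔘(H)| ≤ |V(H)|`.
-/

open Finset

/-- The hyperedge set of the unit-contraction `H/𝓡_u(H)`. -/
def contractEdges {V : Type*} [Fintype V] [DecidableEq V] (E : Finset (Finset V)) :
    Finset (Finset (Finset V)) :=
  E.image (fun e => e.image (unitOf E))

/-- The edge-vertex incidence matrix of the unit-contraction `H/𝓡_u(H)`. -/
def contractIncidence {V : Type*} [Fintype V] [DecidableEq V] (E : Finset (Finset V)) :
    Matrix {e // e ∈ contractEdges E} {W // W ∈ unitsFinset E} ℂ :=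
  fun e W => if W.1 ∈ e.1 then 1 else 0

theorem Matrix.rank_submatrix_of_surjective {m n n₀ R : Type*} [Fintype n] [Fintype n₀]
    [CommSemiring R] (A : Matrix m n R) {c : n₀ → n} (hc : Function.Surjective c) :
    (A.submatrix id c).rank = A.rank := by
  have hcols : Set.range (A.submatrix id c).col = Set.range A.col := by
    rw [← hc.range_comp A.col]
    rfl
  rw [Matrix.rank_eq_finrank_span_cols, Matrix.rank_eq_finrank_span_cols, hcols]

theorem Matrix.finrank_ker_mulVecLin {m n K : Type*} [Fintype n] [Field K] (A : Matrix m n K) :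
    Module.finrank K (LinearMap.ker A.mulVecLin) = Fintype.card n - A.rank := by
  have h := LinearMap.finrank_range_add_finrank_ker A.mulVecLin
  rw [Module.finrank_fintype_fun_eq_card] at h
  rw [Matrix.rank]
  omega

section UnitContraction

variable {V : Type*} [Fintype V] [DecidableEq V] (E : Finset (Finset V))

theorem mem_unitOf_self (v : V) : v ∈ unitOf E v := by
  simp [unitOf]

theorem unitOf_mem_image_unitOf_iff {e : Finset V} (he : e ∈ E) (v : V) :
    unitOf E v ∈ e.image (unitOf E) ↔ v ∈ e := by
  refine ⟨fun h => ?_, fun h => mem_image_of_mem _ h⟩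
  obtain ⟨u, hu, huv⟩ := mem_image.mp h
  have hv : v ∈ unitOf E u := huv ▸ mem_unitOf_self E v
  have hstar : edgeStar E v = edgeStar E u := (mem_filter.mp hv).2
  have he_star : e ∈ edgeStar E v := hstar ▸ mem_filter.mpr ⟨he, hu⟩
  exact (mem_filter.mp he_star).2

theorem image_unitOf_injOn : Set.InjOn (fun e : Finset V => e.image (unitOf E)) E := by
  intro e₁ h₁ e₂ h₂ h
  ext v
  rw [← unitOf_mem_image_unitOf_iff E h₁, ← unitOf_mem_image_unitOf_iff E h₂]
  exact Eq.to_iff (congrArg (unitOf E v ∈ ·) h)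

noncomputable def contractEdgeEquiv : {e // e ∈ E} ≃ {e // e ∈ contractEdges E} :=
  Equiv.ofBijective (fun e => ⟨e.1.image (unitOf E), mem_image_of_mem _ e.2⟩)
    ⟨fun e₁ e₂ h => Subtype.ext (image_unitOf_injOn E e₁.2 e₂.2 (congrArg Subtype.val h)),
     fun e' => by
      obtain ⟨e, he, he'⟩ := mem_image.mp e'.2
      exact ⟨⟨e, he⟩, Subtype.ext he'⟩⟩

def unitAt (v : V) : {W // W ∈ unitsFinset E} :=
  ⟨unitOf E v, mem_image_of_mem _ (mem_univ v)⟩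

theorem unitAt_surjective : Function.Surjective (unitAt E) := by
  rintro ⟨W, hW⟩
  obtain ⟨v, -, rfl⟩ := mem_image.mp hW
  exact ⟨v, rfl⟩

theorem contractIncidence_submatrix :
    (contractIncidence E).submatrix (contractEdgeEquiv E) (unitAt E) = incidence E := by
  ext e v
  exact if_congr (unitOf_mem_image_unitOf_iff E e.2 v) rfl rfl

theorem rank_contractIncidence : (contractIncidence E).rank = (incidence E).rank :=
  calc (contractIncidence E).rank
      = ((contractIncidence E).submatrix (contractEdgeEquiv E) id).rank :=
        (Matrix.rank_submatrix _ _ (Equiv.refl _)).symm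
    _ = (((contractIncidence E).submatrix (contractEdgeEquiv E) id).submatrix id (unitAt E)).rank :=
        (Matrix.rank_submatrix_of_surjective _ (unitAt_surjective E)).symm
    _ = (incidence E).rank := congrArg Matrix.rank (contractIncidence_submatrix E)

end UnitContraction

theorem stmt15_general {V : Type*} [Fintype V] [DecidableEq V]
    (E : Finset (Finset V)) :
    Module.finrank ℂ (LinearMap.ker (incidence E).mulVecLin) =
      Module.finrank ℂ (LinearMap.ker (contractIncidence E).mulVecLin) +
        (Fintype.card V - (unitsFinset E).card) := by
  have hrank_le : (incidence E).rank ≤ (unitsFinset E).card := by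
    rw [← rank_contractIncidence, ← Fintype.card_coe]
    exact Matrix.rank_le_card_width _
  have hunits_le : (unitsFinset E).card ≤ Fintype.card V := card_image_le
  rw [Matrix.finrank_ker_mulVecLin, Matrix.finrank_ker_mulVecLin, rank_contractIncidence,
    Fintype.card_coe]
  omega

/-- Let `H` be a hypergraph with set of units `𝔘(H)`.  The dimension of the null space
of `B_H` equals the dimension of the null space of `B_{H/𝓡_u(H)}` plus
`|V(H)| − |𝔘(H)|`. -/
theorem stmt15 {V : Type*} [Fintype V] [DecidableEq V]
    (E : Finset (Finset V)) (hE : ∀ e ∈ E, e.Nonempty) :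
    Module.finrank ℂ (LinearMap.ker (incidence E).mulVecLin) =
      Module.finrank ℂ (LinearMap.ker (contractIncidence E).mulVecLin) +
        (Fintype.card V - (unitsFinset E).card) :=
  stmt15_general E
end
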